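/- The right-handed realization operators X̂_R^μ : f ↦ x^μ f + θ x^μ ∂_0 f (μ = 0,…,d), regarded as linear operators on A, satisfy the κ-Minkowski relations with opposite sign: X̂_R^0 ∘ X̂_R^k − X̂_R^k ∘ X̂_R^0 = −θ · X̂_R^k, and X̂_R^k ∘ X̂_R^l = X̂_R^l ∘ X̂_R^k for all k, l ∈ {1,…,d}. -/
import Mathlib


open MvPolynomial

/-- The right-handed realization operator `X̂_R^μ : f ↦ x^μ f + θ x^μ ∂₀ f`. -/
noncomputable def XR (d : ℕ) (θ : ℝ) (μ : Fin (d + 1))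
    (f : MvPolynomial (Fin (d + 1)) ℝ) : MvPolynomial (Fin (d + 1)) ℝ :=
  X μ * f + θ • (X μ * pderiv 0 f)

/-- the right-handed realization operators satisfy the κ-Minkowski
relations with opposite sign: `X̂_R⁰ ∘ X̂_R^k − X̂_R^k ∘ X̂_R⁰ = −θ·X̂_R^k` and
`X̂_R^k ∘ X̂_R^l = X̂_R^l ∘ X̂_R^k`. -/
theorem right_realization_kappaMinkowski (d : ℕ) (hd : 1 ≤ d) (θ : ℝ) :
    (∀ k : Fin d, ∀ f : MvPolynomial (Fin (d + 1)) ℝ,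
      XR d θ 0 (XR d θ k.succ f) - XR d θ k.succ (XR d θ 0 f) =
        -(θ • XR d θ k.succ f)) ∧
    (∀ k l : Fin d, ∀ f : MvPolynomial (Fin (d + 1)) ℝ,
      XR d θ k.succ (XR d θ l.succ f) = XR d θ l.succ (XR d θ k.succ f)) := by
  constructor
  · intro k f
    simp only [XR, smul_add, map_add, Derivation.leibniz, smul_eq_C_mul, map_mul,
      pderiv_X_self, pderiv_X, Fin.succ_ne_zero k, if_neg, Pi.single_eq_of_ne,
      Ne, not_false_iff, mul_one, smul_eq_mul, pderiv_C, smul_zero, mul_zero]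
    ring
  · intro k l f
    simp only [XR, smul_add, map_add, Derivation.leibniz, smul_eq_C_mul, map_mul,
      pderiv_X_self, pderiv_X, Fin.succ_ne_zero, if_neg, Pi.single_eq_of_ne,
      Ne, not_false_iff, mul_one, smul_eq_mul, pderiv_C, smul_zero, mul_zero]
    ring
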